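/- arXiv:2001.05088 — 4 statements merged into one kernel-verified Lean document; each statement's English description precedes it below -/
import Mathlib

section
/- Let $a, b > 0$ with $s a \le b \le t a$ for some scalars $0 < s \le t$, and let $\alpha \in [0,1]$. Then $(1-\alpha) a + \alpha b \le \max\{K(s)^R, K(t)^R\} \cdot a^{1-\alpha} b^{\alpha}$, where $K(h) = (h+1)^2/(4h)$ and $R = \max\{\alpha, 1-\alpha\}$. -/
open Real

lemma log_ge_one_sub_inv {x : ℝ} (hx : 0 < x) : 1 - 1/x ≤ Real.log x := by
  have h := Real.log_le_sub_one_of_pos (show (0:ℝ) < 1/x by positivity)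
  rw [Real.log_div one_ne_zero (ne_of_gt hx), Real.log_one] at h
  linarith

lemma key_half (h α : ℝ) (hh : 0 < h) (h0 : 0 ≤ α) (h2 : α ≤ 1/2) :
    1 - α + α * h ≤ ((h+1)^2/(4*h)) ^ (1-α) * h ^ α := by
  set K : ℝ := (h+1)^2/(4*h) with hKdef
  set c : ℝ := (h+1)/2 with hcdef
  set m : ℝ := 1 - α + α * h with hmdef
  have hK : 0 < K := by positivity
  have hc : 0 < c := by positivity
  have hm : 0 < m := by nlinarith [mul_nonneg h0 hh.le]
  have hRHS : 0 < K ^ (1-α) * h ^ α := by positivity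
  rw [← Real.exp_log hm, ← Real.exp_log hRHS, Real.exp_le_exp]
  rw [Real.log_mul (by positivity) (by positivity), Real.log_rpow hK,
    Real.log_rpow hh]
  have hKeq : K = c^2 / h := by rw [hKdef, hcdef]; ring
  have hlogK : Real.log K = 2 * Real.log c - Real.log h := by
    rw [hKeq, Real.log_div (by positivity) (ne_of_gt hh), Real.log_pow]
    push_cast; ring
  -- h1 : log m ≤ log c + (1-2α)(1-h)/(h+1)
  have h1 : Real.log m - Real.log c ≤ (1-2*α)*((1-h)/(h+1)) := by
    have := Real.log_le_sub_one_of_pos (show (0:ℝ) < m/c by positivity)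
    rw [Real.log_div (ne_of_gt hm) (ne_of_gt hc)] at this
    have heq : m / c - 1 = (1-2*α)*((1-h)/(h+1)) := by
      rw [hmdef, hcdef]; field_simp; ring
    linarith [heq ▸ this]
  -- h2 : (1-h)/(h+1) ≤ log c - log h
  have h2 : (1-h)/(h+1) ≤ Real.log c - Real.log h := by
    have := log_ge_one_sub_inv (show (0:ℝ) < c/h by positivity)
    rw [Real.log_div (ne_of_gt hc) (ne_of_gt hh)] at this
    have heq : 1 - 1/(c/h) = (1-h)/(h+1) := by
      rw [hcdef]; field_simp; ring
    linarith [heq ▸ this]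
  have h3 : (1-2*α)*((1-h)/(h+1)) ≤ (1-2*α)*(Real.log c - Real.log h) :=
    mul_le_mul_of_nonneg_left h2 (by linarith)
  rw [hlogK]
  linarith

lemma key_full (h α : ℝ) (hh : 0 < h) (h0 : 0 ≤ α) (h1 : α ≤ 1) :
    1 - α + α * h ≤ ((h+1)^2/(4*h)) ^ (max α (1-α)) * h ^ α := by
  rcases le_or_gt α (1/2) with hc | hc
  · rw [max_eq_right (by linarith)]
    exact key_half h α hh h0 hc
  · rw [max_eq_left (by linarith)]
    have hinv : 0 < 1/h := by positivity
    have key := key_half (1/h) (1-α) hinv (by linarith) (by linarith)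
    have hKeq : (1/h+1)^2/(4*(1/h)) = (h+1)^2/(4*h) := by
      field_simp; ring
    have hexp : 1 - (1-α) = α := by ring
    rw [hKeq, hexp] at key
    -- key : 1 - (1-α) + (1-α)*(1/h) ≤ K^α * (1/h)^(1-α)
    have hpow : (1/h : ℝ) ^ (1-α) * h = h ^ α := by
      rw [one_div, ← Real.rpow_neg_one h, ← Real.rpow_mul hh.le,
        ← Real.rpow_add_one (ne_of_gt hh)]
      ring_nf
    have key2 := mul_le_mul_of_nonneg_right key hh.le
    have hl : (α + (1-α)*(1/h)) * h = α * h + (1-α) := by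
      field_simp
    rw [hl, mul_assoc, hpow] at key2
    linarith

theorem reverse_young_kantorovich (a b s t α : ℝ) (ha : 0 < a) (hb : 0 < b)
    (hs : 0 < s) (hst : s ≤ t) (hsa : s * a ≤ b) (hbt : b ≤ t * a)
    (hα0 : 0 ≤ α) (hα1 : α ≤ 1) :
    (1 - α) * a + α * b ≤
      max (((s + 1) ^ 2 / (4 * s)) ^ max α (1 - α))
          (((t + 1) ^ 2 / (4 * t)) ^ max α (1 - α)) *
        (a ^ (1 - α) * b ^ α) := by
  have ht : 0 < t := lt_of_lt_of_le hs hst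
  set R := max α (1-α) with hRdef
  have hR : 0 ≤ R := le_max_of_le_left hα0
  set h : ℝ := b / a with hhdef
  have hhpos : 0 < h := div_pos hb ha
  have hsh : s ≤ h := (le_div_iff₀ ha).mpr hsa
  have hht : h ≤ t := (div_le_iff₀ ha).mpr hbt
  set Ks : ℝ := (s+1)^2/(4*s) with hKsdef
  set Kt : ℝ := (t+1)^2/(4*t) with hKtdef
  have hKspos : 0 < Ks := by positivity
  have hKtpos : 0 < Kt := by positivity
  have hKhpos : 0 < (h+1)^2/(4*h) := by positivity
  have hKh : (h+1)^2/(4*h) ≤ max Ks Kt := by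
    rcases le_or_gt h 1 with h1 | h1
    · refine le_max_of_le_left ?_
      rw [hKsdef, div_le_div_iff₀ (by positivity) (by positivity)]
      have hsh1 : s * h ≤ 1 := by nlinarith
      nlinarith [mul_nonneg (sub_nonneg.mpr hsh) (sub_nonneg.mpr hsh1)]
    · refine le_max_of_le_right ?_
      rw [hKtdef, div_le_div_iff₀ (by positivity) (by positivity)]
      have hht1 : (1:ℝ) ≤ h * t := by nlinarith
      nlinarith [mul_nonneg (sub_nonneg.mpr hht) (sub_nonneg.mpr hht1)]
  have step1 := key_full h α hhpos hα0 hα1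
  have step2 : ((h+1)^2/(4*h))^R ≤ (max Ks Kt)^R :=
    Real.rpow_le_rpow hKhpos.le hKh hR
  have hmaxpow : (max Ks Kt)^R ≤ max (Ks^R) (Kt^R) := by
    rcases le_total Ks Kt with hle | hle
    · rw [max_eq_right hle]; exact le_max_of_le_right le_rfl
    · rw [max_eq_left hle]; exact le_max_of_le_left le_rfl
  have hchain : 1 - α + α * h ≤ max (Ks^R) (Kt^R) * h^α := by
    calc 1 - α + α * h ≤ ((h+1)^2/(4*h))^R * h^α := step1
    _ ≤ max (Ks^R) (Kt^R) * h^α := by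
        apply mul_le_mul_of_nonneg_right _ (Real.rpow_nonneg hhpos.le α)
        exact le_trans step2 hmaxpow
  -- rewrite goal
  have hb' : b = a * h := by rw [hhdef]; field_simp
  have hab : a ^ (1-α) * b ^ α = a * h ^ α := by
    rw [hb', Real.mul_rpow ha.le hhpos.le, ← mul_assoc, ← Real.rpow_add ha]
    norm_num
  rw [hab]
  have := mul_le_mul_of_nonneg_left hchain ha.le
  calc (1-α)*a + α*b = a * (1 - α + α * h) := by rw [hb']; ring
  _ ≤ a * (max (Ks^R) (Kt^R) * h^α) := this
  _ = max (Ks^R) (Kt^R) * (a * h^α) := by ring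
end

section
/- The function $f(t) = 1 - e^{-t}$ is geometrically concave on $(0,\infty)$: $1 - e^{-x^{\alpha} y^{1-\alpha}} \ge (1-e^{-x})^{\alpha} (1-e^{-y})^{1-\alpha}$ for all $x, y > 0$ and $\alpha \in [0,1]$. -/
open Real Set

/-! A positive `f` on `(0, ∞)` is geometrically concave as soon as `u ↦ log (f (exp u))` is
concave, i.e. as soon as its derivative, the elasticity `t * f' t / f t` at `t = exp u`, is
antitone. For `f t = 1 - exp (-t)` the elasticity is `t / (exp t - 1)`, the reciprocal of the slope
of `exp` between `0` and `t`, and that slope increases because `exp` is convex. -/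

lemma antitoneOn_div_exp_sub_one : AntitoneOn (fun t : ℝ => t / (exp t - 1)) (Ioi 0) := by
  intro s (hs : 0 < s) t (ht : 0 < t) hst
  have hslope := convexOn_exp.secant_mono (mem_univ 0) (mem_univ s) (mem_univ t)
    hs.ne' ht.ne' hst
  simp only [exp_zero, sub_zero] at hslope
  have hes : 0 < exp s - 1 := by linarith [add_one_lt_exp hs.ne']
  have het : 0 < exp t - 1 := by linarith [add_one_lt_exp ht.ne']
  rw [div_le_div_iff₀ hs ht] at hslope
  rw [div_le_div_iff₀ het hes]
  linarith

lemma concaveOn_log_comp_exp_of_antitoneOn {f f' : ℝ → ℝ}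
    (hf : ∀ t, 0 < t → HasDerivAt f (f' t) t) (hpos : ∀ t, 0 < t → 0 < f t)
    (hanti : AntitoneOn (fun t => t * f' t / f t) (Ioi 0)) :
    ConcaveOn ℝ univ (fun u => log (f (exp u))) := by
  have hderiv : ∀ u, HasDerivAt (fun u => log (f (exp u))) (exp u * f' (exp u) / f (exp u)) u :=
    fun u => (((hf _ (exp_pos u)).comp u (hasDerivAt_exp u)).log
      (hpos _ (exp_pos u)).ne').congr_deriv (by rw [Function.comp_apply, mul_comm])
  refine Antitone.concaveOn_univ_of_deriv (fun u => (hderiv u).differentiableAt) ?_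
  intro u v huv
  rw [(hderiv u).deriv, (hderiv v).deriv]
  exact hanti (exp_pos u) (exp_pos v) (exp_le_exp.2 huv)

lemma rpow_mul_rpow_le_of_concaveOn_log_comp_exp {f : ℝ → ℝ} (hpos : ∀ t, 0 < t → 0 < f t)
    (hconc : ConcaveOn ℝ univ (fun u => log (f (exp u)))) {x y α : ℝ} (hx : 0 < x) (hy : 0 < y)
    (hα0 : 0 ≤ α) (hα1 : α ≤ 1) :
    f x ^ α * f y ^ (1 - α) ≤ f (x ^ α * y ^ (1 - α)) := by
  have hmean : exp (α * log x + (1 - α) * log y) = x ^ α * y ^ (1 - α) := by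
    rw [exp_add, rpow_def_of_pos hx, rpow_def_of_pos hy, mul_comm α, mul_comm (1 - α)]
  have hlog := hconc.2 (mem_univ (log x)) (mem_univ (log y)) hα0 (sub_nonneg.2 hα1)
    (add_sub_cancel α 1)
  simp only [smul_eq_mul, exp_log hx, exp_log hy, hmean] at hlog
  calc f x ^ α * f y ^ (1 - α)
      = exp (α * log (f x) + (1 - α) * log (f y)) := by
        rw [exp_add, rpow_def_of_pos (hpos x hx), rpow_def_of_pos (hpos y hy), mul_comm α,
          mul_comm (1 - α)]
    _ ≤ exp (log (f (x ^ α * y ^ (1 - α)))) := exp_le_exp.2 hlog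
    _ = f (x ^ α * y ^ (1 - α)) :=
        exp_log (hpos _ (mul_pos (rpow_pos_of_pos hx α) (rpow_pos_of_pos hy (1 - α))))

lemma one_sub_exp_neg_pos {t : ℝ} (ht : 0 < t) : 0 < 1 - exp (-t) := by
  linarith [exp_lt_one_iff.2 (neg_lt_zero.2 ht)]

theorem one_sub_exp_neg_geom_concave (x y α : ℝ) (hx : 0 < x) (hy : 0 < y)
    (hα0 : 0 ≤ α) (hα1 : α ≤ 1) :
    1 - Real.exp (-(x ^ α * y ^ (1 - α))) ≥
      (1 - Real.exp (-x)) ^ α * (1 - Real.exp (-y)) ^ (1 - α) := by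
  have hderiv (t : ℝ) : HasDerivAt (fun t => 1 - exp (-t)) (exp (-t)) t := by
    simpa using ((hasDerivAt_neg t).exp).const_sub 1
  have helasticity : EqOn (fun t => t / (exp t - 1)) (fun t => t * exp (-t) / (1 - exp (-t)))
      (Ioi 0) := by
    intro t (ht : 0 < t)
    simp only [exp_neg]
    field_simp
  have hanti := antitoneOn_div_exp_sub_one.congr helasticity
  exact rpow_mul_rpow_le_of_concaveOn_log_comp_exp (fun _ => one_sub_exp_neg_pos)
    (concaveOn_log_comp_exp_of_antitoneOn (fun t _ => hderiv t) (fun _ => one_sub_exp_neg_pos)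
      hanti) hx hy hα0 hα1
end

section
/- For $w > 0$ with $w \ne 1$ and $\alpha \in (0,1)$, the generalized Kantorovich constant $K(w,\alpha) = \frac{w^{\alpha} - w}{(\alpha-1)(w-1)}\left(\frac{\alpha-1}{\alpha} \cdot \frac{w^{\alpha}-1}{w^{\alpha}-w}\right)^{\alpha}$ satisfies $0 < K(w,\alpha) \le 1$. -/
/-! With `t = (w ^ α - 1) / (w - 1)`, which lies in `(0, 1)` because `w ^ α` lies strictly between
`1` and `w`, the constant becomes `(t / α) ^ α * ((1 - t) / (1 - α)) ^ (1 - α)`. This is positive, and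
by the weighted AM–GM inequality it is at most `α * (t / α) + (1 - α) * ((1 - t) / (1 - α)) = 1`. -/

namespace Real

theorem rpow_sub_one_div_sub_one_mem_Ioo {w α : ℝ} (hw : 0 < w) (hw1 : w ≠ 1)
    (hα0 : 0 < α) (hα1 : α < 1) : (w ^ α - 1) / (w - 1) ∈ Set.Ioo 0 1 := by
  rcases hw1.lt_or_gt with hlt | hgt
  · have hlt1 : w ^ α < 1 := rpow_lt_one hw.le hlt hα0
    have hgtw : w < w ^ α := by
      simpa using rpow_lt_rpow_of_exponent_gt hw hlt hα1
    exact ⟨div_pos_of_neg_of_neg (by linarith) (by linarith),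
      (div_lt_one_of_neg (by linarith)).mpr (by linarith)⟩
  · have hgt1 : 1 < w ^ α := one_lt_rpow hgt hα0
    have hltw : w ^ α < w := by
      simpa using rpow_lt_rpow_of_exponent_lt hgt hα1
    exact ⟨div_pos (by linarith) (by linarith), (div_lt_one (by linarith)).mpr (by linarith)⟩

theorem mul_div_rpow_eq_rpow_mul_rpow_one_sub {x y : ℝ} (hx : 0 ≤ x) (hy : 0 < y) (a : ℝ) :
    y * (x / y) ^ a = x ^ a * y ^ (1 - a) := by
  rw [div_rpow hx hy.le, rpow_sub hy, rpow_one]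
  have : 0 < y ^ a := rpow_pos_of_pos hy a
  field_simp

end Real

theorem gen_kantorovich_mem_Ioc (w α : ℝ) (hw : 0 < w) (hw1 : w ≠ 1)
    (hα0 : 0 < α) (hα1 : α < 1) :
    0 < ((w ^ α - w) / ((α - 1) * (w - 1))) *
        (((α - 1) / α) * ((w ^ α - 1) / (w ^ α - w))) ^ α ∧
    ((w ^ α - w) / ((α - 1) * (w - 1))) *
        (((α - 1) / α) * ((w ^ α - 1) / (w ^ α - w))) ^ α ≤ 1 := by
  obtain ⟨ht0, ht1⟩ := Real.rpow_sub_one_div_sub_one_mem_Ioo hw hw1 hα0 hα1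
  set t := (w ^ α - 1) / (w - 1) with ht
  have h1t : 0 < 1 - t := by linarith
  have h1α : 0 < 1 - α := by linarith
  have hw1' : w - 1 ≠ 0 := sub_ne_zero.mpr hw1
  have hnum : w ^ α - 1 = t * (w - 1) := by rw [ht, div_mul_cancel₀ _ hw1']
  have hden : w ^ α - w = (t - 1) * (w - 1) := by linear_combination hnum
  have hfactor : (w ^ α - w) / ((α - 1) * (w - 1)) = (1 - t) / (1 - α) := by
    rw [hden]
    field_simp [show α - 1 ≠ 0 by linarith]
    ring
  have hbase : (α - 1) / α * ((w ^ α - 1) / (w ^ α - w)) = (t / α) / ((1 - t) / (1 - α)) := by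
    rw [hnum, hden]
    field_simp [show t - 1 ≠ 0 by linarith]
    ring
  rw [hfactor, hbase, Real.mul_div_rpow_eq_rpow_mul_rpow_one_sub (by positivity) (by positivity)]
  refine ⟨by positivity, ?_⟩
  calc (t / α) ^ α * ((1 - t) / (1 - α)) ^ (1 - α)
      ≤ α * (t / α) + (1 - α) * ((1 - t) / (1 - α)) :=
        Real.geom_mean_le_arith_mean2_weighted hα0.le h1α.le (by positivity) (by positivity)
          (by ring)
    _ = 1 := by field_simp; ring
end

section
/- Let $p,q > 1$ with $1/p + 1/q = 1$, and let $a, b$ be reals with $a, b > 1$ such that $s a^p \le b^q \le t a^p$ for scalars $0 < s \le t$. Then $ab - 1 \ge \frac{1}{c}(a^p - 1)^{1/p}(b^q - 1)^{1/q}$, where $c = \max\{K(s)^R, K(t)^R\}$, $K(h) = (h+1)^2/(4h)$, and $R = \max\{1/p, 1/q\}$. -/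
set_option maxHeartbeats 1600000 in
theorem scalar_aczel_reverse (p q s t a b : ℝ)
    (hp : 1 < p) (hq : 1 < q) (hpq : 1 / p + 1 / q = 1)
    (hs : 0 < s) (hst : s ≤ t) (ha : 1 < a) (hb : 1 < b)
    (hsa : s * a ^ p ≤ b ^ q) (hbt : b ^ q ≤ t * a ^ p) :
    a * b - 1 ≥
      (1 / max (((s + 1) ^ 2 / (4 * s)) ^ max (1 / p) (1 / q))
               (((t + 1) ^ 2 / (4 * t)) ^ max (1 / p) (1 / q))) *
        ((a ^ p - 1) ^ (1 / p) * (b ^ q - 1) ^ (1 / q)) := by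
  have hp0 : 0 < p := by linarith
  have hq0 : 0 < q := by linarith
  have ha0 : 0 < a := by linarith
  have hb0 : 0 < b := by linarith
  have hw1 : (0:ℝ) ≤ 1/p := by positivity
  have hw2 : (0:ℝ) ≤ 1/q := by positivity
  have hA : 1 < a ^ p := (Real.one_lt_rpow_iff_of_pos ha0).mpr (Or.inl ⟨ha, hp0⟩)
  have hB : 1 < b ^ q := (Real.one_lt_rpow_iff_of_pos hb0).mpr (Or.inl ⟨hb, hq0⟩)
  have hA0 : 0 < a ^ p := lt_trans one_pos hA
  have hB0 : 0 < b ^ q := lt_trans one_pos hB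
  -- (a^p)^(1/p) = a
  have haA : (a ^ p) ^ (1/p) = a := by
    rw [← Real.rpow_mul (le_of_lt ha0), mul_one_div, div_self (ne_of_gt hp0), Real.rpow_one]
  have hbB : (b ^ q) ^ (1/q) = b := by
    rw [← Real.rpow_mul (le_of_lt hb0), mul_one_div, div_self (ne_of_gt hq0), Real.rpow_one]
  -- main inequality M ≤ a*b - 1
  set X : ℝ := (a ^ p - 1) / a ^ p with hXdef
  set Y : ℝ := (b ^ q - 1) / b ^ q with hYdef
  have hX0 : 0 ≤ X := div_nonneg (by linarith) (le_of_lt hA0)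
  have hY0 : 0 ≤ Y := div_nonneg (by linarith) (le_of_lt hB0)
  have step1 : X ^ (1/p) * Y ^ (1/q) ≤ (1/p) * X + (1/q) * Y :=
    Real.geom_mean_le_arith_mean2_weighted hw1 hw2 hX0 hY0 hpq
  have step2 : (1 / a ^ p) ^ (1/p) * (1 / b ^ q) ^ (1/q) ≤
      (1/p) * (1 / a ^ p) + (1/q) * (1 / b ^ q) :=
    Real.geom_mean_le_arith_mean2_weighted hw1 hw2 (by positivity) (by positivity) hpq
  have hinv : (1 / a ^ p) ^ (1/p) * (1 / b ^ q) ^ (1/q) = 1 / (a * b) := by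
    rw [Real.div_rpow zero_le_one (le_of_lt hA0), Real.div_rpow zero_le_one (le_of_lt hB0),
      Real.one_rpow, Real.one_rpow, haA, hbB, div_mul_div_comm, one_mul]
  have hsum : (1/p) * X + (1/q) * Y = 1 - ((1/p) * (1 / a ^ p) + (1/q) * (1 / b ^ q)) := by
    rw [hXdef, hYdef]
    have hpq2 : q + p = p * q := by
      have h := hpq
      field_simp at h
      linarith
    field_simp
    nlinarith [hA0, hB0, hpq2, mul_pos hA0 hB0]
  have step3 : X ^ (1/p) * Y ^ (1/q) ≤ 1 - 1 / (a * b) := by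
    rw [← hinv]; rw [hsum] at step1; linarith
  have hM : (a ^ p - 1) ^ (1/p) * (b ^ q - 1) ^ (1/q) ≤ a * b - 1 := by
    have h1 : (a ^ p - 1) ^ (1/p) = a * X ^ (1/p) := by
      rw [hXdef, Real.div_rpow (by linarith) (le_of_lt hA0), haA,
        eq_comm, mul_div_assoc']
      rw [mul_comm, mul_div_assoc, div_self (by positivity : a ≠ 0), mul_one]
    have h2 : (b ^ q - 1) ^ (1/q) = b * Y ^ (1/q) := by
      rw [hYdef, Real.div_rpow (by linarith) (le_of_lt hB0), hbB,
        eq_comm, mul_div_assoc']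
      rw [mul_comm, mul_div_assoc, div_self (by positivity : b ≠ 0), mul_one]
    rw [h1, h2]
    have hab0 : 0 < a * b := by positivity
    calc a * X ^ (1/p) * (b * Y ^ (1/q)) = (a * b) * (X ^ (1/p) * Y ^ (1/q)) := by ring
    _ ≤ (a * b) * (1 - 1 / (a * b)) := by
        exact mul_le_mul_of_nonneg_left step3 (le_of_lt hab0)
    _ = a * b - 1 := by field_simp
  -- c ≥ 1
  set R : ℝ := max (1/p) (1/q) with hRdef
  have hR0 : 0 ≤ R := le_trans hw1 (le_max_left _ _)
  have hKs : 1 ≤ ((s + 1) ^ 2 / (4 * s)) ^ R := by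
    have h1 : 1 ≤ (s + 1) ^ 2 / (4 * s) := by
      rw [le_div_iff₀ (by positivity)]; nlinarith [sq_nonneg (s - 1)]
    calc (1:ℝ) = 1 ^ R := (Real.one_rpow R).symm
    _ ≤ ((s + 1) ^ 2 / (4 * s)) ^ R := Real.rpow_le_rpow zero_le_one h1 hR0
  have hc : 1 ≤ max (((s + 1) ^ 2 / (4 * s)) ^ R) (((t + 1) ^ 2 / (4 * t)) ^ R) :=
    le_trans hKs (le_max_left _ _)
  have hc0 : 0 < max (((s + 1) ^ 2 / (4 * s)) ^ R) (((t + 1) ^ 2 / (4 * t)) ^ R) := by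
    linarith
  have hM0 : 0 ≤ (a ^ p - 1) ^ (1/p) * (b ^ q - 1) ^ (1/q) := by
    have := Real.rpow_nonneg (by linarith : (0:ℝ) ≤ a ^ p - 1) (1/p)
    have := Real.rpow_nonneg (by linarith : (0:ℝ) ≤ b ^ q - 1) (1/q)
    positivity
  have hfrac : 1 / max (((s + 1) ^ 2 / (4 * s)) ^ R) (((t + 1) ^ 2 / (4 * t)) ^ R) ≤ 1 :=
    div_le_one_of_le₀ hc (le_of_lt hc0)
  calc (1 / max (((s + 1) ^ 2 / (4 * s)) ^ R) (((t + 1) ^ 2 / (4 * t)) ^ R)) *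
        ((a ^ p - 1) ^ (1/p) * (b ^ q - 1) ^ (1/q))
      ≤ 1 * ((a ^ p - 1) ^ (1/p) * (b ^ q - 1) ^ (1/q)) :=
        mul_le_mul_of_nonneg_right hfrac hM0
    _ = (a ^ p - 1) ^ (1/p) * (b ^ q - 1) ^ (1/q) := one_mul _
    _ ≤ a * b - 1 := hM
end
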